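/- arXiv:1010.3782 — 6 statements merged into one kernel-verified Lean document; each statement's English description precedes it below -/
import Mathlib

section
/- Let X be a real random variable whose density is the mixture p·φ_{μ₁,σ²} + (1−p)·φ_{μ₂,σ²} of two Gaussian densities with common variance σ² > 0, means μ₁ > μ₂, and mixing weight 0 < p < 1. Set a = (μ₁−μ₂)/(2σ²) and b = (1/2)log(p/(1−p)) − (μ₁²−μ₂²)/(4σ²). Then E[tanh(aX + b)] = tanh(a·E[X] + b − (2p−1)a²σ²). -/
open MeasureTheory ProbabilityTheory Real
open scoped ENNReal NNReal

lemma my_continuous_tanh : Continuous Real.tanh := by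
  have h : Real.tanh = fun x => Real.sinh x / Real.cosh x :=
    funext fun x => Real.tanh_eq_sinh_div_cosh x
  rw [h]
  exact Real.continuous_sinh.div Real.continuous_cosh fun x => (Real.cosh_pos x).ne'

lemma my_abs_tanh_le (x : ℝ) : |Real.tanh x| ≤ 1 := by
  rw [Real.tanh_eq_sinh_div_cosh, abs_div, abs_of_pos (Real.cosh_pos x),
    div_le_one (Real.cosh_pos x), Real.sinh_eq, Real.cosh_eq, abs_le]
  have h1 := Real.exp_pos x
  have h2 := Real.exp_pos (-x)
  constructor <;> nlinarith

lemma my_tanh_half_log {y : ℝ} (hy : 0 < y) :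
    Real.tanh ((1 / 2) * Real.log y) = (y - 1) / (y + 1) := by
  set u := (1 / 2) * Real.log y with hu
  have h2u : Real.exp u * Real.exp u = y := by
    rw [← Real.exp_add]
    have h : u + u = Real.log y := by rw [hu]; ring
    rw [h, Real.exp_log hy]
  have he := Real.exp_pos u
  have hne3 : Real.exp u ≠ 0 := he.ne'
  have hne : Real.exp u + (Real.exp u)⁻¹ ≠ 0 := by positivity
  rw [Real.tanh_eq_sinh_div_cosh, Real.sinh_eq, Real.cosh_eq, Real.exp_neg, ← h2u]
  field_simp

lemma my_integral_gaussianReal (μ : ℝ) (v : NNReal) (hv : v ≠ 0) (g : ℝ → ℝ) :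
    ∫ x, g x ∂(gaussianReal μ v) = ∫ x, gaussianPDFReal μ v x * g x := by
  rw [gaussianReal_of_var_ne_zero _ hv]
  have hm : Measurable fun x => (gaussianPDFReal μ v x).toNNReal :=
    (measurable_gaussianPDFReal μ v).real_toNNReal
  have h : gaussianPDF μ v = fun x => ((gaussianPDFReal μ v x).toNNReal : ℝ≥0∞) := rfl
  rw [h, integral_withDensity_eq_integral_smul hm g]
  refine integral_congr_ae (ae_of_all _ fun x => ?_)
  simp [NNReal.smul_def, Real.coe_toNNReal _ (gaussianPDFReal_nonneg μ v x)]

theorem tanh_gaussian_mixture (μ₁ μ₂ σsq p a b : ℝ) (v : NNReal)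
    (hv : (v : ℝ) = σsq) (hσ : 0 < σsq) (hμ : μ₂ < μ₁) (hp0 : 0 < p) (hp1 : p < 1)
    (ha : a = (μ₁ - μ₂) / (2 * σsq))
    (hb : b = (1 / 2) * Real.log (p / (1 - p)) - (μ₁ ^ 2 - μ₂ ^ 2) / (4 * σsq)) :
    ∫ x, Real.tanh (a * x + b)
        ∂(ENNReal.ofReal p • gaussianReal μ₁ v + ENNReal.ofReal (1 - p) • gaussianReal μ₂ v)
      = Real.tanh (a * (p * μ₁ + (1 - p) * μ₂) + b - (2 * p - 1) * a ^ 2 * σsq) := by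
  have hσne : σsq ≠ 0 := hσ.ne'
  have hvne : v ≠ 0 := by
    intro h; rw [h] at hv; simp at hv; exact hσne hv.symm
  have hp1' : 0 < 1 - p := by linarith
  have hfc : Continuous fun x : ℝ => Real.tanh (a * x + b) :=
    my_continuous_tanh.comp ((continuous_const.mul continuous_id).add continuous_const)
  have hint : ∀ μ0 : ℝ, Integrable (fun x => Real.tanh (a * x + b)) (gaussianReal μ0 v) :=
    fun μ0 => (integrable_const (1:ℝ)).mono' hfc.aestronglyMeasurable
      (ae_of_all _ fun x => by simpa using my_abs_tanh_le (a * x + b))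
  -- product integrability
  have hintp : ∀ μ0 : ℝ, Integrable (fun x => gaussianPDFReal μ0 v x * Real.tanh (a * x + b)) := by
    intro μ0
    refine (integrable_gaussianPDFReal μ0 v).mono'
      (((measurable_gaussianPDFReal μ0 v).mul hfc.measurable).aestronglyMeasurable)
      (ae_of_all _ fun x => ?_)
    have hn := gaussianPDFReal_nonneg μ0 v x
    rw [norm_mul, Real.norm_eq_abs, Real.norm_eq_abs, abs_of_nonneg hn]
    exact mul_le_of_le_one_right hn (my_abs_tanh_le _)
  rw [integral_add_measure ((hint μ₁).smul_measure ENNReal.ofReal_ne_top)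
      ((hint μ₂).smul_measure ENNReal.ofReal_ne_top),
    integral_smul_measure, integral_smul_measure,
    ENNReal.toReal_ofReal hp0.le, ENNReal.toReal_ofReal hp1'.le,
    my_integral_gaussianReal μ₁ v hvne, my_integral_gaussianReal μ₂ v hvne,
    smul_eq_mul, smul_eq_mul, ← integral_const_mul, ← integral_const_mul,
    ← integral_add ((hintp μ₁).const_mul p) ((hintp μ₂).const_mul (1 - p))]
  -- pointwise key identity
  have key : ∀ x : ℝ, p * (gaussianPDFReal μ₁ v x * Real.tanh (a * x + b))
      + (1 - p) * (gaussianPDFReal μ₂ v x * Real.tanh (a * x + b))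
      = p * gaussianPDFReal μ₁ v x - (1 - p) * gaussianPDFReal μ₂ v x := by
    intro x
    have h2t : 2 * (a * x + b) = Real.log p - Real.log (1 - p)
        + ((x - μ₂) ^ 2 / (2 * σsq) - (x - μ₁) ^ 2 / (2 * σsq)) := by
      rw [ha, hb, Real.log_div hp0.ne' hp1'.ne']
      field_simp
      ring
    have hpdfpos : ∀ μ0 : ℝ, 0 < gaussianPDFReal μ0 v x :=
      fun μ0 => gaussianPDFReal_pos μ0 v x hvne
    have hBexp : p * gaussianPDFReal μ₁ v x
        = (1 - p) * gaussianPDFReal μ₂ v x * Real.exp (2 * (a * x + b)) := by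
      simp only [gaussianPDFReal, hv]
      rw [h2t, Real.exp_add, Real.exp_sub, Real.exp_log hp0, Real.exp_log hp1', Real.exp_sub]
      have hc : (0:ℝ) < Real.sqrt (2 * Real.pi * σsq) := Real.sqrt_pos.mpr (by positivity)
      have h1 : Real.exp (-(x - μ₁) ^ 2 / (2 * σsq))
          = (Real.exp ((x - μ₁) ^ 2 / (2 * σsq)))⁻¹ := by
        rw [← Real.exp_neg]; ring_nf
      have h2 : Real.exp (-(x - μ₂) ^ 2 / (2 * σsq))
          = (Real.exp ((x - μ₂) ^ 2 / (2 * σsq)))⁻¹ := by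
        rw [← Real.exp_neg]; ring_nf
      rw [h1, h2]
      have e1 := Real.exp_pos ((x - μ₁) ^ 2 / (2 * σsq))
      have e2 := Real.exp_pos ((x - μ₂) ^ 2 / (2 * σsq))
      field_simp
    set t := a * x + b with htdef
    have h2 : Real.exp (2 * t) = Real.exp t * Real.exp t := by
      rw [← Real.exp_add]; ring_nf
    have he : Real.exp t ≠ 0 := (Real.exp_pos t).ne'
    have hden : Real.exp t + (Real.exp t)⁻¹ ≠ 0 := by positivity
    rw [Real.tanh_eq_sinh_div_cosh, Real.sinh_eq, Real.cosh_eq, Real.exp_neg]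
    rw [h2] at hBexp
    set T := (rexp t - (rexp t)⁻¹) / 2 / ((rexp t + (rexp t)⁻¹) / 2) with hT
    have hstep : p * (gaussianPDFReal μ₁ v x * T) + (1 - p) * (gaussianPDFReal μ₂ v x * T)
        = T * (p * gaussianPDFReal μ₁ v x) + T * ((1 - p) * gaussianPDFReal μ₂ v x) := by ring
    rw [hstep, hBexp, hT]
    field_simp
  rw [integral_congr_ae (ae_of_all _ key), integral_sub
      ((integrable_gaussianPDFReal μ₁ v).const_mul p)
      ((integrable_gaussianPDFReal μ₂ v).const_mul (1 - p)),
    integral_const_mul, integral_const_mul,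
    integral_gaussianPDFReal_eq_one μ₁ hvne, integral_gaussianPDFReal_eq_one μ₂ hvne]
  have harg : a * (p * μ₁ + (1 - p) * μ₂) + b - (2 * p - 1) * a ^ 2 * σsq
      = (1 / 2) * Real.log (p / (1 - p)) := by
    rw [ha, hb]
    field_simp
    ring
  rw [harg, my_tanh_half_log (by positivity : (0:ℝ) < p / (1 - p))]
  field_simp
  ring
end

section
/- Fix m ∈ ℕ, m > 0. Let ψ and ψ_{𝐬ₙ} be smooth real-valued functions on [0,1] for each binary string 𝐬ₙ ∈ {0,1}ⁿ, 1 ≤ n ≤ m+1, with ψ(0)=0 and ψ_{𝐬ₙ}(0)=0 for all 𝐬ₙ with n < m. If ψ′(t) = (1/2)ψ_{(0)}(t) + (1/(2√t))ψ_{(1)}(t) and ψ_{𝐬ₙ}′(t) = (1/2)ψ_{(𝐬ₙ,0)}(t) + (1/(2√t))ψ_{(𝐬ₙ,1)}(t) for all 𝐬ₙ with 1 ≤ n ≤ m, then ψ(t) = 2^{−m} Σ_{𝐬_m} (∫₀ᵗ∫₀^{t₁}⋯∫₀^{t_{m−1}} ∏_{n=1}^m t_n^{−s_n/2} dt_m⋯dt₁)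 ψ_{𝐬_m}(0) + 2^{−(m+1)} Σ_{𝐬_{m+1}} ∫₀ᵗ∫₀^{t₁}⋯∫₀^{t_m} ∏_{n=1}^{m+1} t_n^{−s_n/2} ψ_{𝐬_{m+1}}(t_{m+1}) dt_{m+1}⋯dt₁. -/
open MeasureTheory

/-- Iterated integral over the ordered simplex `0 ≤ tₘ ≤ ⋯ ≤ t₁ ≤ t`, where each level
`n` carries the weight `tₙ^{-sₙ/2}` (i.e. `1/√tₙ` if `sₙ = 1` and `1` if `sₙ = 0`), and
the function `f` is evaluated at the innermost variable. -/
noncomputable def simplexInt : List Bool → (ℝ → ℝ) → ℝ → ℝ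
  | [], f, t => f t
  | b :: rest, f, t =>
      ∫ u in Set.Ioc (0 : ℝ) t, (if b then (Real.sqrt u)⁻¹ else 1) * simplexInt rest f u

namespace SIAux

noncomputable def w (b : Bool) (u : ℝ) : ℝ := if b then (Real.sqrt u)⁻¹ else 1

lemma simplexInt_nil (f : ℝ → ℝ) (t : ℝ) : simplexInt [] f t = f t := rfl

lemma simplexInt_cons (b : Bool) (rest : List Bool) (f : ℝ → ℝ) (t : ℝ) :
    simplexInt (b :: rest) f t = ∫ u in Set.Ioc (0 : ℝ) t, w b u * simplexInt rest f u := rfl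

lemma simplexInt_append (l l' : List Bool) (f : ℝ → ℝ) :
    simplexInt (l ++ l') f = simplexInt l (simplexInt l' f) := by
  induction l with
  | nil => rfl
  | cons b rest ih => funext t; simp [simplexInt_cons, ih]

lemma integrable_w (b : Bool) (t : ℝ) : IntegrableOn (w b) (Set.Ioc 0 t) := by
  rcases le_or_gt t 0 with h | h
  · rw [Set.Ioc_eq_empty (by exact not_lt.mpr h)]; simp
  cases b with
  | false =>
    have : w false = fun _ : ℝ => (1:ℝ) := rfl
    rw [this]
    exact (integrableOn_const_iff (C := (1:ℝ))).mpr (Or.inr measure_Ioc_lt_top)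
  | true =>
    have h1 : IntegrableOn (fun u : ℝ => u ^ (-(1/2) : ℝ)) (Set.Ioc 0 t) := by
      have := intervalIntegral.intervalIntegrable_rpow' (a := 0) (b := t)
        (r := -(1/2)) (by norm_num)
      rwa [intervalIntegrable_iff_integrableOn_Ioc_of_le h.le] at this
    refine h1.congr_fun (fun u hu => ?_) measurableSet_Ioc
    rw [w]
    simp only [if_true]
    rw [Real.rpow_neg hu.1.le, Real.sqrt_eq_rpow]

lemma integrable_w_mul (b : Bool) {f : ℝ → ℝ} (hf : ContinuousOn f (Set.Icc 0 1))
    {t : ℝ} (ht : t ∈ Set.Icc (0:ℝ) 1) :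
    IntegrableOn (fun u => w b u * f u) (Set.Ioc 0 t) := by
  obtain ⟨C, hC⟩ := (isCompact_Icc (a := (0:ℝ)) (b := 1)).exists_bound_of_continuousOn hf
  have hmeas : AEStronglyMeasurable f (volume.restrict (Set.Ioc (0:ℝ) t)) :=
    (hf.mono (fun u hu => ⟨hu.1.le, hu.2.trans ht.2⟩)).aestronglyMeasurable measurableSet_Ioc
  have hbd : ∀ᵐ u ∂(volume.restrict (Set.Ioc (0:ℝ) t)), ‖f u‖ ≤ max C 0 := by
    refine (ae_restrict_iff' measurableSet_Ioc).mpr (Filter.Eventually.of_forall fun u hu => ?_)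
    exact le_max_of_le_left (hC u ⟨hu.1.le, hu.2.trans ht.2⟩)
  have := Integrable.bdd_mul (integrable_w b t) hmeas hbd
  exact this.congr (Filter.Eventually.of_forall fun u => mul_comm _ _)

lemma cont_primitive (b : Bool) {f : ℝ → ℝ} (hf : ContinuousOn f (Set.Icc 0 1)) :
    ContinuousOn (fun t => ∫ u in Set.Ioc (0:ℝ) t, w b u * f u) (Set.Icc 0 1) := by
  apply intervalIntegral.continuousOn_primitive
  rw [integrableOn_Icc_iff_integrableOn_Ioc]
  exact integrable_w_mul b hf (Set.right_mem_Icc.mpr zero_le_one)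

lemma cont_simplexInt (l : List Bool) {f : ℝ → ℝ} (hf : ContinuousOn f (Set.Icc 0 1)) :
    ContinuousOn (simplexInt l f) (Set.Icc 0 1) := by
  induction l with
  | nil => exact hf
  | cons b rest ih =>
    have := cont_primitive b ih
    exact this

lemma simplexInt_congr (l : List Bool) {f g : ℝ → ℝ} {t : ℝ}
    (h : ∀ u ∈ Set.Ioc (0:ℝ) t, f u = g u) (hft : f t = g t) :
    simplexInt l f t = simplexInt l g t := by
  induction l generalizing t with
  | nil => exact hft
  | cons b rest ih =>
    rw [simplexInt_cons, simplexInt_cons]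
    refine setIntegral_congr_fun measurableSet_Ioc (fun u hu => ?_)
    have : simplexInt rest f u = simplexInt rest g u :=
      ih (fun v hv => h v ⟨hv.1, hv.2.trans hu.2⟩) (h u hu)
    rw [this]

lemma simplexInt_combo (l : List Bool) {f g h : ℝ → ℝ} (a b c : ℝ)
    (hf : ContinuousOn f (Set.Icc 0 1)) (hg : ContinuousOn g (Set.Icc 0 1))
    (hh : ContinuousOn h (Set.Icc 0 1)) {t : ℝ} (ht : t ∈ Set.Icc (0:ℝ) 1) :
    simplexInt l (fun u => a * f u + b * g u + c * h u) t =
      a * simplexInt l f t + b * simplexInt l g t + c * simplexInt l h t := by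
  induction l generalizing t with
  | nil => rfl
  | cons d rest ih =>
    rw [simplexInt_cons, simplexInt_cons, simplexInt_cons, simplexInt_cons]
    have step1 : ∫ u in Set.Ioc (0:ℝ) t, w d u * simplexInt rest (fun u => a * f u + b * g u + c * h u) u
        = ∫ u in Set.Ioc (0:ℝ) t, (a * (w d u * simplexInt rest f u) + b * (w d u * simplexInt rest g u)
            + c * (w d u * simplexInt rest h u)) := by
      refine setIntegral_congr_fun measurableSet_Ioc (fun u hu => ?_)
      have hu1 : u ∈ Set.Icc (0:ℝ) 1 := ⟨hu.1.le, hu.2.trans ht.2⟩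
      rw [ih hu1]; ring
    rw [step1]
    have If := (integrable_w_mul d (cont_simplexInt rest hf) ht).const_mul a
    have Ig := (integrable_w_mul d (cont_simplexInt rest hg) ht).const_mul b
    have Ih := (integrable_w_mul d (cont_simplexInt rest hh) ht).const_mul c
    have Ifg : Integrable (fun x => a * (w d x * simplexInt rest f x)
        + b * (w d x * simplexInt rest g x)) (volume.restrict (Set.Ioc 0 t)) := If.add Ig
    rw [integral_add Ifg Ih, integral_add If Ig,
      integral_const_mul, integral_const_mul, integral_const_mul]

lemma ftc {g g0 g1 : ℝ → ℝ} (hg : ContinuousOn g (Set.Icc 0 1))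
    (hg0 : ContinuousOn g0 (Set.Icc 0 1)) (hg1 : ContinuousOn g1 (Set.Icc 0 1))
    (hd : ∀ u ∈ Set.Ioo (0:ℝ) 1,
      HasDerivAt g ((1/2) * g0 u + (1/(2*Real.sqrt u)) * g1 u) u) :
    ∀ t ∈ Set.Icc (0:ℝ) 1,
      g t = g 0 + (1/2) * simplexInt [false] g0 t + (1/2) * simplexInt [true] g1 t := by
  intro t ht
  set D : ℝ → ℝ := fun u => (1/2) * g0 u + (1/(2*Real.sqrt u)) * g1 u with hD
  have hDeq : ∀ u, D u = (1/2) * (w false u * g0 u) + (1/2) * (w true u * g1 u) := by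
    have w0 : ∀ u : ℝ, w false u = 1 := fun u => rfl
    have w1 : ∀ u : ℝ, w true u = (Real.sqrt u)⁻¹ := fun u => rfl
    intro u
    simp only [hD, w0, w1]
    rw [one_div (2 * Real.sqrt u), mul_inv]
    ring
  rcases eq_or_lt_of_le ht.1 with h0 | h0
  · simp [simplexInt_cons, ← h0]
  have htIcc : t ∈ Set.Icc (0:ℝ) 1 := ht
  have hI0 : IntegrableOn (fun u => w false u * g0 u) (Set.Ioc 0 t) :=
    integrable_w_mul false hg0 htIcc
  have hI1 : IntegrableOn (fun u => w true u * g1 u) (Set.Ioc 0 t) :=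
    integrable_w_mul true hg1 htIcc
  have hID : IntegrableOn D (Set.Ioc 0 t) := by
    have hsum : IntegrableOn (fun u => (1/2) * (w false u * g0 u) + (1/2) * (w true u * g1 u))
        (Set.Ioc 0 t) := (hI0.const_mul (1/2)).add (hI1.const_mul (1/2))
    exact hsum.congr_fun (fun u _ => (hDeq u).symm) measurableSet_Ioc
  have hint : IntervalIntegrable D volume 0 t := by
    rwa [intervalIntegrable_iff_integrableOn_Ioc_of_le h0.le]
  have hsub : Set.Icc (0:ℝ) t ⊆ Set.Icc 0 1 := Set.Icc_subset_Icc le_rfl ht.2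
  have hder : ∀ x ∈ Set.Ioo (0:ℝ) t, HasDerivAt g (D x) x := fun x hx =>
    hd x ⟨hx.1, hx.2.trans_le ht.2⟩
  have hFTC := intervalIntegral.integral_eq_sub_of_hasDerivAt_of_le h0.le
    (hg.mono hsub) hder hint
  rw [intervalIntegral.integral_of_le h0.le] at hFTC
  have hsplit : ∫ u in Set.Ioc (0:ℝ) t, D u
      = (1/2) * (∫ u in Set.Ioc (0:ℝ) t, w false u * g0 u)
        + (1/2) * ∫ u in Set.Ioc (0:ℝ) t, w true u * g1 u := by
    rw [setIntegral_congr_fun measurableSet_Ioc (fun u _ => hDeq u)]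
    have h05 : Integrable (fun u => (1/2 : ℝ) * (w false u * g0 u))
        (volume.restrict (Set.Ioc (0:ℝ) t)) := hI0.const_mul (1/2)
    rw [integral_add h05 (hI1.const_mul (1/2)), integral_const_mul, integral_const_mul]
  have e0 : simplexInt [false] g0 t = ∫ u in Set.Ioc (0:ℝ) t, w false u * g0 u := rfl
  have e1 : simplexInt [true] g1 t = ∫ u in Set.Ioc (0:ℝ) t, w true u * g1 u := rfl
  rw [e0, e1]
  rw [hsplit] at hFTC
  linarith

lemma expand (l : List Bool) {F F0 F1 : ℝ → ℝ} (hF : ContinuousOn F (Set.Icc 0 1))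
    (hF0 : ContinuousOn F0 (Set.Icc 0 1)) (hF1 : ContinuousOn F1 (Set.Icc 0 1))
    (hd : ∀ u ∈ Set.Ioo (0:ℝ) 1,
      HasDerivAt F ((1/2) * F0 u + (1/(2*Real.sqrt u)) * F1 u) u)
    {t : ℝ} (ht : t ∈ Set.Icc (0:ℝ) 1) :
    simplexInt l F t = F 0 * simplexInt l (fun _ => (1:ℝ)) t
      + (1/2) * simplexInt (l ++ [false]) F0 t + (1/2) * simplexInt (l ++ [true]) F1 t := by
  have h := ftc hF hF0 hF1 hd
  have hEq : ∀ u ∈ Set.Icc (0:ℝ) 1, F u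
      = F 0 * (fun _ => (1:ℝ)) u + (1/2) * simplexInt [false] F0 u
        + (1/2) * simplexInt [true] F1 u := by
    intro u hu; rw [h u hu]; ring
  rw [simplexInt_congr l (f := F)
    (g := fun u => F 0 * (fun _ => (1:ℝ)) u + (1/2) * simplexInt [false] F0 u
        + (1/2) * simplexInt [true] F1 u)
    (fun u hu => hEq u ⟨hu.1.le, hu.2.trans ht.2⟩) (hEq t ht)]
  rw [simplexInt_combo l (F 0) (1/2) (1/2) continuousOn_const
    (cont_simplexInt [false] hF0) (cont_simplexInt [true] hF1) ht]
  rw [simplexInt_append, simplexInt_append]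

lemma ofFn_snoc {k : ℕ} (s : Fin k → Bool) (b : Bool) :
    List.ofFn (Fin.snoc s b) = List.ofFn s ++ [b] := by
  rw [List.ofFn_succ']
  simp [Fin.snoc_castSucc, Fin.snoc_last, List.concat_eq_append]

def snocEquivBool (k : ℕ) : (Fin k → Bool) × Bool ≃ (Fin (k+1) → Bool) where
  toFun p := Fin.snoc p.1 p.2
  invFun s := (fun i => s i.castSucc, s (Fin.last k))
  left_inv := by
    rintro ⟨s, b⟩
    refine Prod.ext ?_ ?_
    · funext i; simp
    · simp
  right_inv := by
    intro s; funext i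
    refine Fin.lastCases ?_ (fun j => ?_) i <;> simp

lemma sum_snoc (k : ℕ) (F : List Bool → ℝ) :
    ∑ s : Fin (k+1) → Bool, F (List.ofFn s)
      = ∑ s : Fin k → Bool, (F (List.ofFn s ++ [false]) + F (List.ofFn s ++ [true])) := by
  have h1 : ∑ s : Fin (k+1) → Bool, F (List.ofFn s)
      = ∑ p : (Fin k → Bool) × Bool, F (List.ofFn (Fin.snoc p.1 p.2)) :=
    (Fintype.sum_equiv (snocEquivBool k) (fun p => F (List.ofFn (Fin.snoc p.1 p.2)))
      (fun s => F (List.ofFn s)) (fun p => rfl)).symm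
  rw [h1, Fintype.sum_prod_type]
  refine Finset.sum_congr rfl fun s _ => ?_
  rw [Fintype.sum_bool, ofFn_snoc, ofFn_snoc, add_comm]

lemma sum_fin_one (F : List Bool → ℝ) :
    ∑ s : Fin 1 → Bool, F (List.ofFn s) = F [false] + F [true] := by
  rw [sum_snoc 0 F, Fintype.sum_unique]
  simp

end SIAux

open SIAux in
theorem iterated_derivative_expansion (m : ℕ) (hm : 0 < m)
    (ψ : ℝ → ℝ) (Ψ : List Bool → ℝ → ℝ)
    (hψsmooth : ContDiffOn ℝ (⊤ : ℕ∞) ψ (Set.Icc 0 1))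
    (hΨsmooth : ∀ s : List Bool, 1 ≤ s.length → s.length ≤ m + 1 →
      ContDiffOn ℝ (⊤ : ℕ∞) (Ψ s) (Set.Icc 0 1))
    (hψ0 : ψ 0 = 0)
    (hΨ0 : ∀ s : List Bool, 1 ≤ s.length → s.length < m → Ψ s 0 = 0)
    (hψd : ∀ t ∈ Set.Ioo (0 : ℝ) 1,
      HasDerivAt ψ ((1 / 2) * Ψ [false] t + (1 / (2 * Real.sqrt t)) * Ψ [true] t) t)
    (hΨd : ∀ s : List Bool, 1 ≤ s.length → s.length ≤ m → ∀ t ∈ Set.Ioo (0 : ℝ) 1,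
      HasDerivAt (Ψ s)
        ((1 / 2) * Ψ (s ++ [false]) t + (1 / (2 * Real.sqrt t)) * Ψ (s ++ [true]) t) t) :
    ∀ t ∈ Set.Icc (0 : ℝ) 1,
      ψ t = (1 / 2 ^ m) *
          (∑ s : Fin m → Bool,
            simplexInt (List.ofFn s) (fun _ => (1 : ℝ)) t * Ψ (List.ofFn s) 0) +
        (1 / 2 ^ (m + 1)) *
          ∑ s : Fin (m + 1) → Bool, simplexInt (List.ofFn s) (Ψ (List.ofFn s)) t := by
  have hcontΨ : ∀ s : List Bool, 1 ≤ s.length → s.length ≤ m + 1 →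
      ContinuousOn (Ψ s) (Set.Icc 0 1) := fun s h1 h2 => (hΨsmooth s h1 h2).continuousOn
  have hcontψ : ContinuousOn ψ (Set.Icc 0 1) := hψsmooth.continuousOn
  -- intermediate expansion
  have key : ∀ k : ℕ, 1 ≤ k → k ≤ m → ∀ t ∈ Set.Icc (0:ℝ) 1,
      ψ t = (1/2^k) * ∑ s : Fin k → Bool,
        simplexInt (List.ofFn s) (Ψ (List.ofFn s)) t := by
    intro k
    induction k with
    | zero => omega
    | succ k ih =>
      intro _ hkm t ht
      rcases Nat.eq_zero_or_pos k with hk0 | hk1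
      · subst hk0
        have hb := ftc hcontψ
          (hcontΨ [false] (by simp) (by simp only [List.length_cons, List.length_nil]; omega))
          (hcontΨ [true] (by simp) (by simp only [List.length_cons, List.length_nil]; omega))
          hψd t ht
        rw [hψ0] at hb
        rw [sum_fin_one (fun l => simplexInt l (Ψ l) t)]
        rw [hb]; ring
      · have hexp : ∀ s : Fin k → Bool,
            simplexInt (List.ofFn s) (Ψ (List.ofFn s)) t
              = (1/2) * simplexInt (List.ofFn s ++ [false]) (Ψ (List.ofFn s ++ [false])) t
                + (1/2) * simplexInt (List.ofFn s ++ [true]) (Ψ (List.ofFn s ++ [true])) t := by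
          intro s
          have hlen : (List.ofFn s).length = k := by simp
          have h := expand (List.ofFn s)
            (hcontΨ _ (by omega) (by omega))
            (hcontΨ (List.ofFn s ++ [false])
              (by simp only [List.length_append, List.length_ofFn, List.length_cons,
                List.length_nil]; omega)
              (by simp only [List.length_append, List.length_ofFn, List.length_cons,
                List.length_nil]; omega))
            (hcontΨ (List.ofFn s ++ [true])
              (by simp only [List.length_append, List.length_ofFn, List.length_cons,
                List.length_nil]; omega)
              (by simp only [List.length_append, List.length_ofFn, List.length_cons,
                List.length_nil]; omega))
            (hΨd (List.ofFn s) (by omega) (by omega)) ht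
          rw [hΨ0 (List.ofFn s) (by omega) (by omega)] at h
          rw [h]; ring
        rw [ih hk1 (by omega) t ht]
        rw [sum_snoc k (fun l => simplexInt l (Ψ l) t)]
        rw [Finset.sum_congr rfl (fun s _ => hexp s)]
        simp only [Finset.mul_sum]
        refine Finset.sum_congr rfl fun s _ => ?_
        rw [pow_succ]; ring
  intro t ht
  have hfin : ∀ s : Fin m → Bool,
      simplexInt (List.ofFn s) (Ψ (List.ofFn s)) t
        = simplexInt (List.ofFn s) (fun _ => (1:ℝ)) t * Ψ (List.ofFn s) 0
          + (1/2) * simplexInt (List.ofFn s ++ [false]) (Ψ (List.ofFn s ++ [false])) t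
          + (1/2) * simplexInt (List.ofFn s ++ [true]) (Ψ (List.ofFn s ++ [true])) t := by
    intro s
    have hlen : (List.ofFn s).length = m := by simp
    have h := expand (List.ofFn s)
      (hcontΨ _ (by omega) (by omega))
      (hcontΨ (List.ofFn s ++ [false])
        (by simp only [List.length_append, List.length_ofFn, List.length_cons,
          List.length_nil]; omega)
        (by simp only [List.length_append, List.length_ofFn, List.length_cons,
          List.length_nil]; omega))
      (hcontΨ (List.ofFn s ++ [true])
        (by simp only [List.length_append, List.length_ofFn, List.length_cons,
          List.length_nil]; omega)
        (by simp only [List.length_append, List.length_ofFn, List.length_cons,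
          List.length_nil]; omega))
      (hΨd (List.ofFn s) (by omega) (by omega)) ht
    rw [h]; ring
  rw [key m hm le_rfl t ht]
  rw [Finset.sum_congr rfl (fun s _ => hfin s)]
  rw [sum_snoc m (fun l => simplexInt l (Ψ l) t)]
  simp only [Finset.mul_sum]
  rw [← Finset.sum_add_distrib]
  refine Finset.sum_congr rfl fun s _ => ?_
  rw [pow_succ]; ring
end

section
/- For any real numbers a, b, c, h and ξ, one has |cosh(c(ξ+a)+h)/cosh(ca+h) − cosh(c(ξ+b)+h)/cosh(cb+h)| ≤ |c|·|a−b|·cosh(cξ). -/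
open Real

theorem cosh_ratio_lipschitz (a b c h ξ : ℝ) :
    |Real.cosh (c * (ξ + a) + h) / Real.cosh (c * a + h)
        - Real.cosh (c * (ξ + b) + h) / Real.cosh (c * b + h)|
      ≤ |c| * |a - b| * Real.cosh (c * ξ) := by
  set f : ℝ → ℝ := fun t => Real.cosh (c * (ξ + t) + h) / Real.cosh (c * t + h) with hf
  have hderiv : ∀ t : ℝ, HasDerivAt f (c * Real.sinh (c * ξ) / (Real.cosh (c * t + h)) ^ 2) t := by
    intro t
    have h1 : HasDerivAt (fun t : ℝ => c * (ξ + t) + h) c t := by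
      simpa using (((hasDerivAt_id t).const_add ξ).const_mul c).add_const h
    have h2 : HasDerivAt (fun t : ℝ => c * t + h) c t := by
      simpa using ((hasDerivAt_id t).const_mul c).add_const h
    have hu := (Real.hasDerivAt_cosh (c * (ξ + t) + h)).comp t h1
    have hv := (Real.hasDerivAt_cosh (c * t + h)).comp t h2
    have hne : Real.cosh (c * t + h) ≠ 0 := (Real.cosh_pos _).ne'
    have := hu.div hv hne
    convert this using 1
    case e'_4 => rfl
    case e'_5 => rfl
    case e'_8 => rfl
    have : c * ξ = (c * (ξ + t) + h) - (c * t + h) := by ring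
    rw [this, Real.sinh_sub]
    simp only [Function.comp]
    field_simp
  have key := Convex.norm_image_sub_le_of_norm_hasDerivWithin_le
    (f := f) (f' := fun t => c * Real.sinh (c * ξ) / (Real.cosh (c * t + h)) ^ 2)
    (C := |c| * Real.cosh (c * ξ)) (s := Set.univ)
    (fun x _ => (hderiv x).hasDerivWithinAt)
    (fun x _ => by
      rw [Real.norm_eq_abs, abs_div, abs_mul]
      have h1 : |Real.sinh (c * ξ)| ≤ Real.cosh (c * ξ) := by
        nlinarith [Real.cosh_sq (c * ξ), Real.cosh_pos (c * ξ), abs_nonneg (Real.sinh (c * ξ)),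
          sq_abs (Real.sinh (c * ξ))]
      have h2 : (1:ℝ) ≤ |(Real.cosh (c * x + h)) ^ 2| := by
        rw [abs_of_pos (by positivity)]
        nlinarith [Real.one_le_cosh (c * x + h)]
      calc |c| * |Real.sinh (c * ξ)| / |(Real.cosh (c * x + h)) ^ 2|
          ≤ |c| * |Real.sinh (c * ξ)| / 1 :=
            div_le_div_of_nonneg_left ?_ ?_ ?_
        _ ≤ |c| * Real.cosh (c * ξ) := by
            rw [div_one]; exact mul_le_mul_of_nonneg_left h1 (abs_nonneg c)
      · positivity
      · norm_num
      · exact h2)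
    convex_univ (Set.mem_univ a) (Set.mem_univ b)
  simp only [Real.norm_eq_abs, hf] at key
  calc |Real.cosh (c * (ξ + a) + h) / Real.cosh (c * a + h)
        - Real.cosh (c * (ξ + b) + h) / Real.cosh (c * b + h)| = |f a - f b| := by rw [hf]
    _ ≤ |c| * Real.cosh (c * ξ) * |a - b| := by
        show |Real.cosh (c * (ξ + a) + h) / Real.cosh (c * a + h)
          - Real.cosh (c * (ξ + b) + h) / Real.cosh (c * b + h)| ≤ _
        rwa [abs_sub_comm, abs_sub_comm b a] at key
    _ = |c| * |a - b| * Real.cosh (c * ξ) := by ring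
end

section
/- For any real a, c, h, ξ, the derivative in c of the function c ↦ cosh(c(ξ+a)+h)/cosh(ca+h) satisfies |d/dc [cosh(c(ξ+a)+h)/cosh(ca+h)]| ≤ 2(|ξ| + 2|a|)·cosh(cξ). -/
theorem cosh_ratio_deriv_bound (a c h ξ : ℝ) :
    |deriv (fun c : ℝ => Real.cosh (c * (ξ + a) + h) / Real.cosh (c * a + h)) c|
      ≤ 2 * (|ξ| + 2 * |a|) * Real.cosh (c * ξ) := by
  have hv : (0:ℝ) < Real.cosh (c*a+h) := Real.cosh_pos _
  have hu : HasDerivAt (fun c : ℝ => Real.cosh (c*(ξ+a)+h))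
      (Real.sinh (c*(ξ+a)+h) * (ξ+a)) c := by
    have := (((hasDerivAt_id c).mul_const (ξ+a)).add_const h).cosh
    simpa using this
  have hvd : HasDerivAt (fun c : ℝ => Real.cosh (c*a+h))
      (Real.sinh (c*a+h) * a) c := by
    have := (((hasDerivAt_id c).mul_const a).add_const h).cosh
    simpa using this
  have hd : deriv (fun c : ℝ => Real.cosh (c * (ξ + a) + h) / Real.cosh (c * a + h)) c = _ :=
    (hu.div hvd hv.ne').deriv
  rw [hd]
  set u := c*(ξ+a)+h with hu'
  set v := c*a+h with hv'
  have habs : ∀ x : ℝ, |Real.sinh x| ≤ Real.cosh x := by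
    intro x
    rw [abs_le]
    have h1 := Real.cosh_sub_sinh x
    have h2 := Real.sinh_add_cosh x
    have e1 := Real.exp_pos x
    have e2 := Real.exp_pos (-x)
    constructor <;> nlinarith
  have huv : u = c*ξ + v := by rw [hu', hv']; ring
  have hcu : Real.cosh u ≤ 2 * Real.cosh (c*ξ) * Real.cosh v := by
    rw [huv, Real.cosh_add]
    have h1 := habs (c*ξ)
    have h2 := habs v
    have h3 : Real.sinh (c*ξ) * Real.sinh v ≤ Real.cosh (c*ξ) * Real.cosh v := by
      calc Real.sinh (c*ξ) * Real.sinh v ≤ |Real.sinh (c*ξ) * Real.sinh v| := le_abs_self _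
        _ = |Real.sinh (c*ξ)| * |Real.sinh v| := abs_mul _ _
        _ ≤ Real.cosh (c*ξ) * Real.cosh v :=
          mul_le_mul h1 h2 (abs_nonneg _) (Real.cosh_pos _).le
    nlinarith
  have hvpos : (0:ℝ) < Real.cosh v := Real.cosh_pos _
  have hcξ : (0:ℝ) < Real.cosh (c*ξ) := Real.cosh_pos _
  rw [abs_div, abs_pow, abs_of_pos hvpos, div_le_iff₀ (by positivity)]
  have hA : |Real.sinh u * (ξ+a) * Real.cosh v| ≤
      2 * Real.cosh (c*ξ) * Real.cosh v * (|ξ|+|a|) * Real.cosh v := by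
    rw [abs_mul, abs_mul, abs_of_pos hvpos]
    have h1 : |Real.sinh u| ≤ 2 * Real.cosh (c*ξ) * Real.cosh v := (habs u).trans hcu
    have h2 : |ξ+a| ≤ |ξ|+|a| := abs_add_le _ _
    calc |Real.sinh u| * |ξ+a| * Real.cosh v
        ≤ (2 * Real.cosh (c*ξ) * Real.cosh v) * (|ξ|+|a|) * Real.cosh v := by
          gcongr
      _ = 2 * Real.cosh (c*ξ) * Real.cosh v * (|ξ|+|a|) * Real.cosh v := by ring
  have hB : |Real.cosh u * (Real.sinh v * a)| ≤
      2 * Real.cosh (c*ξ) * Real.cosh v * |a| * Real.cosh v := by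
    rw [abs_mul, abs_mul, abs_of_pos (Real.cosh_pos u)]
    calc Real.cosh u * (|Real.sinh v| * |a|)
        ≤ (2 * Real.cosh (c*ξ) * Real.cosh v) * (Real.cosh v * |a|) := by
          have h2 := habs v
          gcongr
      _ = 2 * Real.cosh (c*ξ) * Real.cosh v * |a| * Real.cosh v := by ring
  calc |Real.sinh u * (ξ+a) * Real.cosh v - Real.cosh u * (Real.sinh v * a)|
      ≤ |Real.sinh u * (ξ+a) * Real.cosh v| + |Real.cosh u * (Real.sinh v * a)| :=
        abs_sub _ _
    _ ≤ 2 * Real.cosh (c*ξ) * Real.cosh v * (|ξ|+|a|) * Real.cosh v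
        + 2 * Real.cosh (c*ξ) * Real.cosh v * |a| * Real.cosh v := add_le_add hA hB
    _ ≤ 2 * (|ξ| + 2*|a|) * Real.cosh (c*ξ) * Real.cosh v ^ 2 := by nlinarith [abs_nonneg a, abs_nonneg ξ]
end

section
/- For any real a, c, c', h with c' < c, and any ξ ∈ ℝ, |cosh(c(ξ+a)+h)/cosh(ca+h) − cosh(c'(ξ+a)+h)/cosh(c'a+h)| ≤ 2(|ξ| + 2|a|) ∫_{c'}^{c} cosh(tξ) dt. -/
lemma abs_sinh_le_cosh (x : ℝ) : |Real.sinh x| ≤ Real.cosh x := by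
  have h1 := Real.cosh_add_sinh x
  have h2 := Real.cosh_sub_sinh x
  have e1 := Real.exp_pos x
  have e2 := Real.exp_pos (-x)
  rw [abs_le]; constructor <;> nlinarith

lemma cosh_add_le (x y : ℝ) : Real.cosh (x + y) ≤ 2 * Real.cosh x * Real.cosh y := by
  rw [Real.cosh_add]
  have h1 := abs_sinh_le_cosh x
  have h2 := abs_sinh_le_cosh y
  have := abs_mul (Real.sinh x) (Real.sinh y)
  have hx := Real.cosh_pos (x := x)
  have hy := Real.cosh_pos (x := y)
  nlinarith [le_abs_self (Real.sinh x * Real.sinh y), abs_nonneg (Real.sinh x),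
    abs_nonneg (Real.sinh y), mul_le_mul h1 h2 (abs_nonneg _) hx.le]

theorem cosh_ratio_increment_bound (a c c' h ξ : ℝ) (hcc : c' < c) :
    |Real.cosh (c * (ξ + a) + h) / Real.cosh (c * a + h)
        - Real.cosh (c' * (ξ + a) + h) / Real.cosh (c' * a + h)|
      ≤ 2 * (|ξ| + 2 * |a|) * ∫ t in c'..c, Real.cosh (t * ξ) := by
  set f : ℝ → ℝ := fun t => Real.cosh (t * (ξ + a) + h) / Real.cosh (t * a + h) with hf
  set f' : ℝ → ℝ := fun t =>
    (Real.sinh (t * (ξ + a) + h) * (ξ + a) * Real.cosh (t * a + h)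
      - Real.cosh (t * (ξ + a) + h) * (Real.sinh (t * a + h) * a))
      / (Real.cosh (t * a + h)) ^ 2 with hf'
  have hpos : ∀ t : ℝ, 0 < Real.cosh (t * a + h) := fun t => Real.cosh_pos _
  have hderiv : ∀ t : ℝ, HasDerivAt f (f' t) t := by
    intro t
    have h1 : HasDerivAt (fun t : ℝ => Real.cosh (t * (ξ + a) + h))
        (Real.sinh (t * (ξ + a) + h) * (ξ + a)) t := by
      have hl : HasDerivAt (fun t : ℝ => t * (ξ + a) + h) (ξ + a) t := by
        simpa using ((hasDerivAt_id t).mul_const (ξ + a)).add_const h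
      exact (Real.hasDerivAt_cosh _).comp t hl
    have h2 : HasDerivAt (fun t : ℝ => Real.cosh (t * a + h))
        (Real.sinh (t * a + h) * a) t := by
      have hl : HasDerivAt (fun t : ℝ => t * a + h) a t := by
        simpa using ((hasDerivAt_id t).mul_const a).add_const h
      exact (Real.hasDerivAt_cosh _).comp t hl
    exact h1.div h2 (ne_of_gt (hpos t))
  have hcont' : Continuous f' := by
    apply Continuous.div
    · fun_prop
    · fun_prop
    · intro t; exact pow_ne_zero 2 (ne_of_gt (hpos t))
  have key : ∀ t : ℝ, |f' t| ≤ 2 * (|ξ| + 2 * |a|) * Real.cosh (t * ξ) := by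
    intro t
    have hy := hpos t
    have hx : (0:ℝ) < Real.cosh (t * (ξ + a) + h) := Real.cosh_pos _
    have hz : (0:ℝ) < Real.cosh (t * ξ) := Real.cosh_pos _
    have hadd : Real.cosh (t * (ξ + a) + h) ≤ 2 * Real.cosh (t * ξ) * Real.cosh (t * a + h) := by
      have := cosh_add_le (t * ξ) (t * a + h)
      have heq : t * ξ + (t * a + h) = t * (ξ + a) + h := by ring
      rwa [heq] at this
    rw [hf', abs_div, abs_pow, abs_of_pos hy, div_le_iff₀ (by positivity)]
    have h1 : |Real.sinh (t * (ξ + a) + h) * (ξ + a) * Real.cosh (t * a + h)|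
        ≤ Real.cosh (t * (ξ + a) + h) * |ξ + a| * Real.cosh (t * a + h) := by
      rw [abs_mul, abs_mul, abs_of_pos hy]
      have := abs_sinh_le_cosh (t * (ξ + a) + h)
      exact mul_le_mul_of_nonneg_right
        (mul_le_mul_of_nonneg_right this (abs_nonneg _)) hy.le
    have h2 : |Real.cosh (t * (ξ + a) + h) * (Real.sinh (t * a + h) * a)|
        ≤ Real.cosh (t * (ξ + a) + h) * (Real.cosh (t * a + h) * |a|) := by
      rw [abs_mul, abs_mul, abs_of_pos hx]
      have := abs_sinh_le_cosh (t * a + h)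
      exact mul_le_mul_of_nonneg_left
        (mul_le_mul_of_nonneg_right this (abs_nonneg _)) hx.le
    have htri := abs_sub (Real.sinh (t * (ξ + a) + h) * (ξ + a) * Real.cosh (t * a + h))
      (Real.cosh (t * (ξ + a) + h) * (Real.sinh (t * a + h) * a))
    have hsum : |Real.sinh (t * (ξ + a) + h) * (ξ + a) * Real.cosh (t * a + h)
        - Real.cosh (t * (ξ + a) + h) * (Real.sinh (t * a + h) * a)|
        ≤ Real.cosh (t * (ξ + a) + h) * Real.cosh (t * a + h) * (|ξ + a| + |a|) := by
      calc _ ≤ |Real.sinh (t * (ξ + a) + h) * (ξ + a) * Real.cosh (t * a + h)|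
            + |Real.cosh (t * (ξ + a) + h) * (Real.sinh (t * a + h) * a)| := abs_sub _ _
        _ ≤ _ := by nlinarith
    have hξa : |ξ + a| + |a| ≤ |ξ| + 2 * |a| := by
      have := abs_add_le ξ a; linarith
    calc |Real.sinh (t * (ξ + a) + h) * (ξ + a) * Real.cosh (t * a + h)
        - Real.cosh (t * (ξ + a) + h) * (Real.sinh (t * a + h) * a)|
        ≤ Real.cosh (t * (ξ + a) + h) * Real.cosh (t * a + h) * (|ξ + a| + |a|) := hsum
      _ ≤ (2 * Real.cosh (t * ξ) * Real.cosh (t * a + h)) * Real.cosh (t * a + h)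
            * (|ξ| + 2 * |a|) := by
          nlinarith [abs_nonneg ξ, abs_nonneg a, abs_nonneg (ξ + a),
            mul_pos hy hy, mul_le_mul hadd hξa (by positivity) (by positivity)]
      _ = 2 * (|ξ| + 2 * |a|) * Real.cosh (t * ξ) * Real.cosh (t * a + h) ^ 2 := by ring
  have hint' : IntervalIntegrable f' MeasureTheory.volume c' c :=
    hcont'.intervalIntegrable _ _
  have ftc : (∫ t in c'..c, f' t) = f c - f c' :=
    intervalIntegral.integral_eq_sub_of_hasDerivAt (fun t _ => hderiv t) hint'
  have hgoal : |f c - f c'| ≤ 2 * (|ξ| + 2 * |a|) * ∫ t in c'..c, Real.cosh (t * ξ) := by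
    rw [← ftc]
    calc |∫ t in c'..c, f' t| ≤ ∫ t in c'..c, |f' t| := by
          simpa using intervalIntegral.norm_integral_le_integral_norm (μ := MeasureTheory.volume)
            (f := f') hcc.le
      _ ≤ ∫ t in c'..c, 2 * (|ξ| + 2 * |a|) * Real.cosh (t * ξ) := by
          apply intervalIntegral.integral_mono_on hcc.le
          · exact hint'.abs
          · exact (Continuous.intervalIntegrable (by fun_prop) _ _)
          · intro t _; exact key t
      _ = 2 * (|ξ| + 2 * |a|) * ∫ t in c'..c, Real.cosh (t * ξ) := by
          rw [intervalIntegral.integral_const_mul]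
  exact hgoal
end

section
/- Let ξ be a centered Gaussian random variable with variance 1−q where 0 ≤ q < 1, and let γ, β, h ∈ ℝ. Then E[U(ξ+γ)cosh(β(ξ+γ)+h)] / (exp((β²/2)(1−q))·cosh(βγ+h)) = ∫ U(x) ν(dx), where ν is the probability measure with density p·φ_{γ+β(1−q), 1−q} + (1−p)·φ_{γ−β(1−q), 1−q} and p = e^{βγ+h}/(e^{βγ+h} + e^{−βγ−h}), valid for any continuous U of moderate growth. -/
open MeasureTheory ProbabilityTheory

/-- A function `U : ℝ → ℝ` is of moderate growth if for every `a > 0`,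
`U x * exp (-a * x ^ 2) → 0` as `|x| → ∞`. -/
def ModerateGrowth (U : ℝ → ℝ) : Prop :=
  ∀ a : ℝ, 0 < a →
    Filter.Tendsto (fun x => U x * Real.exp (-a * x ^ 2)) (Filter.cocompact ℝ) (nhds 0)

open scoped NNReal ENNReal
open Real

lemma integrable_exp_quad {c : ℝ} (hc : 0 < c) (b : ℝ) :
    Integrable (fun x : ℝ => Real.exp (-c * x ^ 2 + b * x)) := by
  have key : ∀ x : ℝ, -c * x ^ 2 + b * x = -c * (x - b / (2 * c)) ^ 2 + b ^ 2 / (4 * c) := by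
    intro x; field_simp; ring
  simp_rw [key, Real.exp_add]
  exact ((integrable_exp_neg_mul_sq hc).comp_sub_right (b / (2 * c))).mul_const _

lemma mg_bound {U : ℝ → ℝ} (hUc : Continuous U) (hU : ModerateGrowth U)
    {a : ℝ} (ha : 0 < a) : ∃ C : ℝ, ∀ x, |U x| * Real.exp (-a * x ^ 2) ≤ C := by
  have h := hU a ha
  have h1 := h (Metric.ball_mem_nhds (0:ℝ) one_pos)
  rw [Filter.mem_map, Filter.mem_cocompact] at h1
  obtain ⟨K, hK, hKs⟩ := h1
  have hcont : ContinuousOn (fun x => U x * Real.exp (-a * x ^ 2)) K :=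
    (hUc.mul (by continuity)).continuousOn
  obtain ⟨C, hC⟩ := hK.exists_bound_of_continuousOn hcont
  refine ⟨max C 1, fun x => ?_⟩
  have habs : |U x| * Real.exp (-a * x ^ 2) = |U x * Real.exp (-a * x ^ 2)| := by
    rw [abs_mul, abs_of_pos (Real.exp_pos _)]
  rw [habs]
  by_cases hx : x ∈ K
  · have := hC x hx
    rw [Real.norm_eq_abs] at this
    exact le_trans this (le_max_left _ _)
  · have := hKs hx
    simp only [Set.mem_preimage, Metric.mem_ball, Real.dist_eq, sub_zero] at this
    exact le_trans this.le (le_max_right _ _)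

lemma integrable_mg {U : ℝ → ℝ} (hUc : Continuous U) (hU : ModerateGrowth U)
    {c : ℝ} (hc : 0 < c) (b : ℝ) :
    Integrable (fun x : ℝ => U x * Real.exp (-c * x ^ 2 + b * x)) := by
  obtain ⟨C, hC⟩ := mg_bound hUc hU (half_pos hc)
  refine Integrable.mono' ((integrable_exp_quad (half_pos hc) b).const_mul C)
    ((hUc.mul (by continuity)).aestronglyMeasurable) ?_
  filter_upwards with x
  have hsplit : Real.exp (-c * x ^ 2 + b * x)
      = Real.exp (-(c / 2) * x ^ 2) * Real.exp (-(c / 2) * x ^ 2 + b * x) := by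
    rw [← Real.exp_add]; ring_nf
  rw [Real.norm_eq_abs, abs_mul, abs_of_pos (Real.exp_pos _), hsplit, ← mul_assoc]
  exact mul_le_mul_of_nonneg_right (hC x) (Real.exp_pos _).le

lemma pdf_tilt (m : ℝ) (v : ℝ≥0) (b x : ℝ) :
    gaussianPDFReal m v x * Real.exp (b * x)
      = Real.exp (b * m + b ^ 2 * (v : ℝ) / 2) * gaussianPDFReal (m + b * v) v x := by
  rcases eq_or_ne v 0 with rfl | hv
  · simp [gaussianPDFReal_zero_var]
  · have hv' : (0 : ℝ) < v := by positivity
    simp only [gaussianPDFReal]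
    have hE : Real.exp (-(x - m) ^ 2 / (2 * v)) * Real.exp (b * x)
        = Real.exp (b * m + b ^ 2 * (v : ℝ) / 2)
          * Real.exp (-(x - (m + b * v)) ^ 2 / (2 * v)) := by
      rw [← Real.exp_add, ← Real.exp_add]
      congr 1
      field_simp
      ring
    calc (√(2 * Real.pi * v))⁻¹ * Real.exp (-(x - m) ^ 2 / (2 * v)) * Real.exp (b * x)
        = (√(2 * Real.pi * v))⁻¹ * (Real.exp (-(x - m) ^ 2 / (2 * v)) * Real.exp (b * x)) := by
          ring
      _ = Real.exp (b * m + b ^ 2 * (v : ℝ) / 2)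
            * ((√(2 * Real.pi * v))⁻¹ * Real.exp (-(x - (m + b * v)) ^ 2 / (2 * v))) := by
          rw [hE]; ring

lemma integrable_U_pdf {U : ℝ → ℝ} (hUc : Continuous U) (hU : ModerateGrowth U)
    (m : ℝ) {v : ℝ≥0} (hv : v ≠ 0) :
    Integrable (fun x : ℝ => U x * gaussianPDFReal m v x) := by
  have hv' : (0 : ℝ) < v := by positivity
  have key : ∀ x : ℝ, U x * gaussianPDFReal m v x
      = (√(2 * Real.pi * v))⁻¹ * Real.exp (-(m ^ 2) / (2 * v))
        * (U x * Real.exp (-(1 / (2 * v)) * x ^ 2 + (m / v) * x)) := by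
    intro x
    simp only [gaussianPDFReal]
    rw [show Real.exp (-(x - m) ^ 2 / (2 * (v : ℝ)))
        = Real.exp (-(m ^ 2) / (2 * v)) * Real.exp (-(1 / (2 * v)) * x ^ 2 + (m / v) * x) by
      rw [← Real.exp_add]; congr 1; field_simp; ring]
    ring
  simp_rw [key]
  exact (integrable_mg hUc hU (by positivity) (m / (v : ℝ))).const_mul _

lemma integral_gaussianReal_eq {m : ℝ} {v : ℝ≥0} (hv : v ≠ 0) (g : ℝ → ℝ) :
    ∫ x, g x ∂(gaussianReal m v) = ∫ x, g x * gaussianPDFReal m v x := by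
  rw [gaussianReal_of_var_ne_zero _ hv]
  have hmeas : Measurable fun x => Real.toNNReal (gaussianPDFReal m v x) :=
    (measurable_gaussianPDFReal m v).real_toNNReal
  have hd : gaussianPDF m v = fun x => ((Real.toNNReal (gaussianPDFReal m v x) : ℝ≥0) : ℝ≥0∞) :=
    rfl
  rw [hd, integral_withDensity_eq_integral_smul hmeas g]
  congr 1
  funext x
  rw [NNReal.smul_def, smul_eq_mul, Real.coe_toNNReal _ (gaussianPDFReal_nonneg _ _ _), mul_comm]

lemma integrable_gaussianReal {m : ℝ} {v : ℝ≥0} (hv : v ≠ 0) {g : ℝ → ℝ}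
    (hg : Integrable (fun x => g x * gaussianPDFReal m v x)) :
    Integrable g (gaussianReal m v) := by
  rw [gaussianReal_of_var_ne_zero _ hv]
  have hmeas : Measurable fun x => Real.toNNReal (gaussianPDFReal m v x) :=
    (measurable_gaussianPDFReal m v).real_toNNReal
  have hd : gaussianPDF m v = fun x => ((Real.toNNReal (gaussianPDFReal m v x) : ℝ≥0) : ℝ≥0∞) :=
    rfl
  rw [hd, integrable_withDensity_iff_integrable_smul hmeas]
  refine hg.congr (Filter.Eventually.of_forall fun x => ?_)
  show g x * gaussianPDFReal m v x = (gaussianPDFReal m v x).toNNReal • g x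
  rw [NNReal.smul_def, smul_eq_mul, Real.coe_toNNReal _ (gaussianPDFReal_nonneg _ _ _), mul_comm]

theorem gaussian_cosh_tilt_as_mixture (U : ℝ → ℝ) (hUc : Continuous U)
    (hU : ModerateGrowth U) (q γ β h p : ℝ) (hq0 : 0 ≤ q) (hq1 : q < 1)
    (v : NNReal) (hv : (v : ℝ) = 1 - q)
    (hp : p = Real.exp (β * γ + h) / (Real.exp (β * γ + h) + Real.exp (-β * γ - h))) :
    (∫ y, U (y + γ) * Real.cosh (β * (y + γ) + h) ∂(gaussianReal 0 v))
        / (Real.exp ((β ^ 2 / 2) * (1 - q)) * Real.cosh (β * γ + h))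
      = ∫ x, U x
          ∂(ENNReal.ofReal p • gaussianReal (γ + β * (1 - q)) v
            + ENNReal.ofReal (1 - p) • gaussianReal (γ - β * (1 - q)) v) := by
  have hv' : (0 : ℝ) < v := by rw [hv]; linarith
  have hvne : v ≠ 0 := by
    intro h0
    rw [h0] at hv'
    simp at hv'
  rw [show (1 : ℝ) - q = (v : ℝ) from hv.symm]
  -- integrability
  have hIp : Integrable (fun x => U x * gaussianPDFReal (γ + β * (v : ℝ)) v x) :=
    integrable_U_pdf hUc hU _ hvne
  have hIm : Integrable (fun x => U x * gaussianPDFReal (γ - β * (v : ℝ)) v x) :=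
    integrable_U_pdf hUc hU _ hvne
  set Ip := ∫ x, U x * gaussianPDFReal (γ + β * (v : ℝ)) v x with hIpdef
  set Im := ∫ x, U x * gaussianPDFReal (γ - β * (v : ℝ)) v x with hImdef
  -- nonnegativity of p and 1 - p
  have hp0 : 0 ≤ p := by rw [hp]; positivity
  have h1p : 1 - p = Real.exp (-β * γ - h) / (Real.exp (β * γ + h) + Real.exp (-β * γ - h)) := by
    rw [hp]
    have hS : Real.exp (β * γ + h) + Real.exp (-β * γ - h) ≠ 0 := by positivity
    field_simp
    ring
  have h1p0 : 0 ≤ 1 - p := by rw [h1p]; positivity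
  -- RHS
  have hUint : ∀ m : ℝ, Integrable U (gaussianReal m v) := fun m =>
    integrable_gaussianReal hvne (integrable_U_pdf hUc hU m hvne)
  have hRHS : (∫ x, U x
        ∂(ENNReal.ofReal p • gaussianReal (γ + β * (v : ℝ)) v
          + ENNReal.ofReal (1 - p) • gaussianReal (γ - β * (v : ℝ)) v))
      = p * Ip + (1 - p) * Im := by
    rw [integral_add_measure ((hUint _).smul_measure ENNReal.ofReal_ne_top)
        ((hUint _).smul_measure ENNReal.ofReal_ne_top),
      integral_smul_measure, integral_smul_measure,
      ENNReal.toReal_ofReal hp0, ENNReal.toReal_ofReal h1p0,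
      integral_gaussianReal_eq hvne, integral_gaussianReal_eq hvne]
    simp [smul_eq_mul]
    rfl
  -- LHS : change of variables
  have hL1 : (∫ y, U (y + γ) * Real.cosh (β * (y + γ) + h) ∂(gaussianReal 0 v))
      = ∫ x, U x * Real.cosh (β * x + h) * gaussianPDFReal γ v x := by
    rw [integral_gaussianReal_eq hvne]
    have key : ∀ y : ℝ, U (y + γ) * Real.cosh (β * (y + γ) + h) * gaussianPDFReal 0 v y
        = U (y + γ) * Real.cosh (β * (y + γ) + h) * gaussianPDFReal γ v (y + γ) := by
      intro y
      rw [gaussianPDFReal_add, sub_self]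
    simp_rw [key]
    exact integral_add_right_eq_self
      (fun x => U x * Real.cosh (β * x + h) * gaussianPDFReal γ v x) γ
  -- tilting identities
  have tiltp : ∀ x : ℝ, gaussianPDFReal γ v x * Real.exp (β * x)
      = Real.exp (β * γ + β ^ 2 * (v : ℝ) / 2) * gaussianPDFReal (γ + β * (v : ℝ)) v x :=
    fun x => pdf_tilt γ v β x
  have tiltm : ∀ x : ℝ, gaussianPDFReal γ v x * Real.exp (-β * x)
      = Real.exp (-(β * γ) + β ^ 2 * (v : ℝ) / 2) * gaussianPDFReal (γ - β * (v : ℝ)) v x := by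
    intro x
    have h0 := pdf_tilt γ v (-β) x
    rw [show -β * γ = -(β * γ) by ring, show (-β) ^ 2 = β ^ 2 by ring,
      show γ + -β * (v : ℝ) = γ - β * (v : ℝ) by ring] at h0
    exact h0
  -- expand cosh and tilt
  have hL2 : ∀ x : ℝ, U x * Real.cosh (β * x + h) * gaussianPDFReal γ v x
      = (Real.exp h / 2 * Real.exp (β * γ + β ^ 2 * (v : ℝ) / 2))
          * (U x * gaussianPDFReal (γ + β * (v : ℝ)) v x)
        + (Real.exp (-h) / 2 * Real.exp (-(β * γ) + β ^ 2 * (v : ℝ) / 2))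
          * (U x * gaussianPDFReal (γ - β * (v : ℝ)) v x) := by
    intro x
    have h1 : Real.exp (β * x + h) = Real.exp (β * x) * Real.exp h := by
      rw [← Real.exp_add]
    have h2 : Real.exp (-(β * x + h)) = Real.exp (-β * x) * Real.exp (-h) := by
      rw [← Real.exp_add]; ring_nf
    calc U x * Real.cosh (β * x + h) * gaussianPDFReal γ v x
        = Real.exp h / 2 * (U x * (gaussianPDFReal γ v x * Real.exp (β * x)))
          + Real.exp (-h) / 2 * (U x * (gaussianPDFReal γ v x * Real.exp (-β * x))) := by
          rw [Real.cosh_eq, h1, h2]; ring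
      _ = _ := by rw [tiltp x, tiltm x]; ring
  have hL3 : (∫ x, U x * Real.cosh (β * x + h) * gaussianPDFReal γ v x)
      = (Real.exp h / 2 * Real.exp (β * γ + β ^ 2 * (v : ℝ) / 2)) * Ip
        + (Real.exp (-h) / 2 * Real.exp (-(β * γ) + β ^ 2 * (v : ℝ) / 2)) * Im := by
    simp_rw [hL2]
    rw [integral_add (hIp.const_mul _) (hIm.const_mul _),
      integral_const_mul _ _, integral_const_mul _ _]
  rw [hL1, hL3, hRHS]
  -- final algebra
  have hS : (0 : ℝ) < Real.exp (β * γ + h) + Real.exp (-β * γ - h) := by positivity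
  rw [hp, Real.cosh_eq, show -(β * γ + h) = -β * γ - h by ring]
  have hden : Real.exp ((β ^ 2 / 2) * (v : ℝ))
      * ((Real.exp (β * γ + h) + Real.exp (-β * γ - h)) / 2) ≠ 0 := by positivity
  rw [div_eq_iff hden]
  have e1 : Real.exp (β * γ + β ^ 2 * (v : ℝ) / 2)
      = Real.exp (β * γ) * Real.exp ((β ^ 2 / 2) * (v : ℝ)) := by
    rw [Real.exp_add, show β ^ 2 * (v : ℝ) / 2 = (β ^ 2 / 2) * (v : ℝ) by ring]
  have e2 : Real.exp (-(β * γ) + β ^ 2 * (v : ℝ) / 2)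
      = Real.exp (-(β * γ)) * Real.exp ((β ^ 2 / 2) * (v : ℝ)) := by
    rw [Real.exp_add, show β ^ 2 * (v : ℝ) / 2 = (β ^ 2 / 2) * (v : ℝ) by ring]
  have e3 : Real.exp (β * γ + h) = Real.exp (β * γ) * Real.exp h := Real.exp_add _ _
  have e4 : Real.exp (-β * γ - h) = Real.exp (-(β * γ)) * Real.exp (-h) := by
    rw [show -β * γ - h = -(β * γ) + -h by ring, Real.exp_add]
  rw [e1, e2, e3, e4]
  field_simp
  ring
end
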